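/- For semi-implicit methods, the growth function 𝔯_s defined by 𝔯_s(∅)=0, 𝔯_s(•_l)=1, 𝔯_s([τ₁,…,τ_κ]_l)=1 for l>0, 𝔯_s([τ₁]_0)=𝔯_s(τ₁), and 𝔯_s([τ₁,…,τ_κ]_0)=1+max_j 𝔯_s(τ_j) for κ≥2, satisfies: if 𝔯_s(τ)=k with k≥1, then ρ(τ) ≥ (3/2)k − 1. -/

import Mathlib

inductive CTree (m : ℕ) : Type
  | node : Fin (m + 1) → List (CTree m) → CTree m

namespace CTree

variable {m : ℕ}

def rho : CTree m → ℚ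
  | .node l ts => (if (l : ℕ) = 0 then 1 else 1/2) + (ts.attach.map (fun t => rho t.1)).sum
decreasing_by
  all_goals try simp only [CTree.node.sizeOf_spec, List.cons.sizeOf_spec, List.nil.sizeOf_spec]
  all_goals try have := List.sizeOf_lt_of_mem t.2
  all_goals omega

def height : CTree m → ℕ
  | .node _ ts => 1 + (ts.attach.map (fun t => height t.1)).foldr max 0
decreasing_by
  all_goals try simp only [CTree.node.sizeOf_spec, List.cons.sizeOf_spec, List.nil.sizeOf_spec]
  all_goals try have := List.sizeOf_lt_of_mem t.2
  all_goals omega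

def ram : CTree m → ℕ
  | .node _ [] => 1
  | .node _ [t] => ram t
  | .node _ ts => 1 + (ts.attach.map (fun t => ram t.1)).foldr max 0
decreasing_by
  all_goals try simp only [CTree.node.sizeOf_spec, List.cons.sizeOf_spec, List.nil.sizeOf_spec]
  all_goals try have := List.sizeOf_lt_of_mem t.2
  all_goals omega

def dbl : CTree m → ℕ
  | .node _ [] => 1
  | .node _ ts =>
      let ds := ts.attach.map (fun t => dbl t.1)
      let M := ds.foldr max 0
      if 2 ≤ ds.count M then M + 1 else M
decreasing_by
  all_goals try simp only [CTree.node.sizeOf_spec, List.cons.sizeOf_spec, List.nil.sizeOf_spec]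
  all_goals try have := List.sizeOf_lt_of_mem t.2
  all_goals omega


/-- semi-implicit height-type growth function 𝔥ₛ -/
def hs : CTree m → ℕ
  | .node l ts => if 0 < (l : ℕ) then 1 else 1 + (ts.attach.map (fun t => hs t.1)).foldr max 0
decreasing_by
  all_goals try simp only [CTree.node.sizeOf_spec, List.cons.sizeOf_spec, List.nil.sizeOf_spec]
  all_goals try have := List.sizeOf_lt_of_mem t.2
  all_goals omega

/-- semi-implicit ramification-type growth function 𝔯ₛ -/
def rs : CTree m → ℕ
  | .node _ [] => 1
  | .node l [t] => if 0 < (l : ℕ) then 1 else rs t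
  | .node l ts => if 0 < (l : ℕ) then 1 else 1 + (ts.attach.map (fun t => rs t.1)).foldr max 0
decreasing_by
  all_goals try simp only [CTree.node.sizeOf_spec, List.cons.sizeOf_spec, List.nil.sizeOf_spec]
  all_goals try have := List.sizeOf_lt_of_mem t.2
  all_goals omega

/-- semi-implicit doubling-type growth function 𝔡ₛ -/
def dsm : CTree m → ℕ
  | .node _ [] => 1
  | .node l ts =>
      if 0 < (l : ℕ) then 1 else
      let vals := ts.attach.map (fun t => dsm t.1)
      let M := vals.foldr max 0
      if 2 ≤ vals.count M then M + 1 else M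
decreasing_by
  all_goals try simp only [CTree.node.sizeOf_spec, List.cons.sizeOf_spec, List.nil.sizeOf_spec]
  all_goals try have := List.sizeOf_lt_of_mem t.2
  all_goals omega


end CTree

/-!
Induction along the recursion defining `rs`, using that every node weighs at least `1/2`.
A leaf or a colored root gives `rs = 1 ≤ 2 * rho`; a unary uncolored root adds `1` to `rho` and nothing to
`rs`; a branching uncolored root adds `1` to `rs`, while `rho` gains `1` for the root and at least
`1/2` for a sibling of a child realising the maximum of `rs`.
-/

theorem List.foldr_max_zero_mem {l : List ℕ} (hl : l ≠ []) : l.foldr max 0 ∈ l :=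
  List.maximum_mem (List.foldr_max_of_ne_nil hl).symm

namespace CTree

variable {m : ℕ}

theorem rho_node (l : Fin (m + 1)) (ts : List (CTree m)) :
    rho (node l ts) = (if (l : ℕ) = 0 then 1 else 1 / 2) + (ts.map rho).sum := by
  rw [rho]
  simp

theorem rs_node_of_eq_zero {l : Fin (m + 1)} {ts : List (CTree m)} (hl : (l : ℕ) = 0)
    (hlen : 2 ≤ ts.length) : rs (node l ts) = 1 + (ts.map rs).foldr max 0 := by
  rw [rs.eq_3 l ts (by rintro rfl; simp at hlen) (by rintro t rfl; simp at hlen), if_neg (by omega)]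
  simp

theorem one_half_le_rho (τ : CTree m) : 1 / 2 ≤ rho τ := by
  obtain ⟨l, ts⟩ := τ
  have hsum : 0 ≤ (ts.map rho).sum :=
    List.sum_nonneg fun x hx => by
      obtain ⟨t, -, rfl⟩ := List.mem_map.mp hx
      linarith [one_half_le_rho t]
  rw [rho_node]
  split <;> linarith

theorem length_div_two_le_sum_rho (ts : List (CTree m)) : (ts.length : ℚ) / 2 ≤ (ts.map rho).sum := by
  have := List.card_nsmul_le_sum (ts.map rho) (1 / 2) (by simpa using fun t _ => one_half_le_rho t)
  simp only [List.length_map, nsmul_eq_mul] at this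
  linarith

theorem rho_add_one_half_le_sum_rho {t : CTree m} {ts : List (CTree m)} (ht : t ∈ ts)
    (hlen : 2 ≤ ts.length) : rho t + 1 / 2 ≤ (ts.map rho).sum := by
  classical
  rw [← List.sum_map_erase rho ht]
  have hrest := length_div_two_le_sum_rho (ts.erase t)
  have hlen' : (1 : ℚ) ≤ (ts.erase t).length := by
    rw [List.length_erase_of_mem ht]
    exact_mod_cast Nat.le_sub_one_of_lt hlen
  linarith

theorem three_halves_mul_rs_sub_one_le_rho (τ : CTree m) : 3 / 2 * (rs τ : ℚ) - 1 ≤ rho τ := by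
  induction τ using rs.induct with
  | case1 l =>
    rw [rs]
    linarith [one_half_le_rho (node l [])]
  | case2 l t hl =>
    rw [rs, if_pos hl]
    linarith [one_half_le_rho (node l [t])]
  | case3 l t hl ih =>
    rw [rs, if_neg hl, rho_node, if_pos (by omega)]
    simp only [List.map_cons, List.map_nil, List.sum_cons, List.sum_nil]
    linarith
  | case4 l ts _ _ hl =>
    rw [rs.eq_3 l ts ‹_› ‹_›, if_pos hl]
    linarith [one_half_le_rho (node l ts)]
  | case5 l ts hnil hsingle hl ih =>
    have hlen : 2 ≤ ts.length := by
      match ts, hnil, hsingle with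
      | _ :: _ :: _, _, _ => simp
      | [], h, _ => exact (h rfl).elim
      | [t], _, h => exact (h t rfl).elim
    have hl0 : (l : ℕ) = 0 := by omega
    obtain ⟨t, ht, hmax⟩ := List.mem_map.mp
      (List.foldr_max_zero_mem (l := ts.map rs) (by simpa using hnil))
    rw [rs_node_of_eq_zero hl0 hlen, ← hmax, rho_node, if_pos hl0]
    push_cast
    linarith [ih ⟨t, ht⟩, rho_add_one_half_le_sum_rho ht hlen]

end CTree

open CTree in
theorem stmt10_general (m : ℕ) (τ : CTree m) (k : ℕ) (h : rs τ = k) :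
    (3 : ℚ) / 2 * k - 1 ≤ rho τ :=
  h ▸ three_halves_mul_rs_sub_one_le_rho τ

open CTree in
theorem stmt10 (m : ℕ) (τ : CTree m) (k : ℕ) (hk : 1 ≤ k) (h : rs τ = k) :
    (3 : ℚ) / 2 * k - 1 ≤ rho τ :=
  stmt10_general m τ k h
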